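/- arXiv:1711.02051 — 3 statements merged into one kernel-verified Lean document; each statement's English description precedes it below -/
import Mathlib

section
/- Let A and B be categories with finite coproducts and F : A ⥤ B a functor that preserves initial objects. If there exists a natural isomorphism with components F(x) ⨿ F(y) ≅ F(x ⨿ y) (natural in x and y, not assumed to be the canonical comparison map), then F preserves binary coproducts, i.e. the canonical comparison morphism F(x) ⨿ F(y) ⟶ F(x ⨿ y) induced by the images of the coproduct injections is an isomorphism for all x, y. -/
/-!
For `z` initial in `A` with `F z` initial, the naturality square of `φ` at `(𝟙 x, z ⟶ y)` shows
that `F` of the injection `x ⟶ x ⨿ y` is `e_x ≫ inl ≫ φ x y`, where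
`e_x : F x ≅ F (x ⨿ z) ≅ F x ⨿ F z ≅ F x`; symmetrically on the right. Hence the comparison map
is `coprod.map e_x e_y ≫ φ x y`, a composite of isomorphisms.
-/

open CategoryTheory Limits

namespace CategoryTheory.Limits

variable {C : Type*} [Category C]

lemma isIso_coprod_inl_of_isInitial {a i : C} [HasBinaryCoproduct a i] (hi : IsInitial i) :
    IsIso (coprod.inl : a ⟶ a ⨿ i) :=
  (BinaryCofan.isColimit_iff_isIso_inl hi _).mp ⟨colimit.isColimit _⟩

lemma isIso_coprod_inr_of_isInitial {a i : C} [HasBinaryCoproduct i a] (hi : IsInitial i) :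
    IsIso (coprod.inr : a ⟶ i ⨿ a) :=
  (BinaryCofan.isColimit_iff_isIso_inr hi _).mp ⟨colimit.isColimit _⟩

lemma isIso_coprod_desc_id_to_of_isInitial {a i : C} [HasBinaryCoproduct a i] (hi : IsInitial i) :
    IsIso (coprod.desc (𝟙 a) (hi.to a)) :=
  ⟨coprod.inl,
    coprod.hom_ext (by rw [coprod.inl_desc_assoc, Category.comp_id, Category.id_comp])
      (hi.hom_ext _ _),
    coprod.inl_desc _ _⟩

lemma isIso_coprod_desc_to_id_of_isInitial {a i : C} [HasBinaryCoproduct i a] (hi : IsInitial i) :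
    IsIso (coprod.desc (hi.to a) (𝟙 a)) :=
  ⟨coprod.inr,
    coprod.hom_ext (hi.hom_ext _ _)
      (by rw [coprod.inr_desc_assoc, Category.comp_id, Category.id_comp]),
    coprod.inr_desc _ _⟩

lemma coprod_map_id_of_isInitial {a b i : C} [HasBinaryCoproduct a i] [HasBinaryCoproduct a b]
    (hi : IsInitial i) (g : i ⟶ b) :
    coprod.map (𝟙 a) g = coprod.desc (𝟙 a) (hi.to a) ≫ coprod.inl :=
  coprod.hom_ext (by rw [coprod.inl_map, coprod.inl_desc_assoc]) (hi.hom_ext _ _)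

lemma coprod_map_of_isInitial_id {a b i : C} [HasBinaryCoproduct i a] [HasBinaryCoproduct b a]
    (hi : IsInitial i) (g : i ⟶ b) :
    coprod.map g (𝟙 a) = coprod.desc (hi.to a) (𝟙 a) ≫ coprod.inr :=
  coprod.hom_ext (hi.hom_ext _ _) (by rw [coprod.inr_map, coprod.inr_desc_assoc])

section

variable {A B : Type*} [Category A] [Category B] [HasBinaryCoproducts A] [HasBinaryCoproducts B]
  (F : A ⥤ B) (φ : ∀ x y : A, (F.obj x ⨿ F.obj y) ≅ F.obj (x ⨿ y))

lemma inl_comp_coprodComparison_of_iso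
    (hφ : ∀ {x x' y y' : A} (f : x ⟶ x') (g : y ⟶ y'),
      coprod.map (F.map f) (F.map g) ≫ (φ x' y').hom = (φ x y).hom ≫ F.map (coprod.map f g))
    {z : A} (hz : IsInitial z) (hFz : IsInitial (F.obj z))
    (x y : A) :
    coprod.inl ≫ coprodComparison F x y =
      (F.map coprod.inl ≫ (φ x z).inv ≫ coprod.desc (𝟙 _) (hFz.to _)) ≫
        coprod.inl ≫ (φ x y).hom := by
  have h := hφ (𝟙 x) (hz.to y)
  rw [F.map_id, coprod_map_id_of_isInitial hFz, ← Iso.inv_comp_eq] at h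
  calc coprod.inl ≫ coprodComparison F x y
      = F.map coprod.inl ≫ F.map (coprod.map (𝟙 x) (hz.to y)) := by
        rw [coprodComparison, coprod.inl_desc, ← F.map_comp, coprod.inl_map, Category.id_comp]
    _ = _ := by rw [← h]; simp only [Category.assoc]

lemma inr_comp_coprodComparison_of_iso
    (hφ : ∀ {x x' y y' : A} (f : x ⟶ x') (g : y ⟶ y'),
      coprod.map (F.map f) (F.map g) ≫ (φ x' y').hom = (φ x y).hom ≫ F.map (coprod.map f g))
    {z : A} (hz : IsInitial z) (hFz : IsInitial (F.obj z))
    (x y : A) :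
    coprod.inr ≫ coprodComparison F x y =
      (F.map coprod.inr ≫ (φ z y).inv ≫ coprod.desc (hFz.to _) (𝟙 _)) ≫
        coprod.inr ≫ (φ x y).hom := by
  have h := hφ (hz.to x) (𝟙 y)
  rw [F.map_id, coprod_map_of_isInitial_id hFz, ← Iso.inv_comp_eq] at h
  calc coprod.inr ≫ coprodComparison F x y
      = F.map coprod.inr ≫ F.map (coprod.map (hz.to x) (𝟙 y)) := by
        rw [coprodComparison, coprod.inr_desc, ← F.map_comp, coprod.inr_map, Category.id_comp]
    _ = _ := by rw [← h]; simp only [Category.assoc]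

theorem isIso_coprodComparison_of_iso
    (hφ : ∀ {x x' y y' : A} (f : x ⟶ x') (g : y ⟶ y'),
      coprod.map (F.map f) (F.map g) ≫ (φ x' y').hom = (φ x y).hom ≫ F.map (coprod.map f g))
    {z : A} (hz : IsInitial z) (hFz : IsInitial (F.obj z))
    (x y : A) : IsIso (coprodComparison F x y) := by
  have := isIso_coprod_inl_of_isInitial (a := x) hz
  have := isIso_coprod_inr_of_isInitial (a := y) hz
  have := isIso_coprod_desc_id_to_of_isInitial (a := F.obj x) hFz
  have := isIso_coprod_desc_to_id_of_isInitial (a := F.obj y) hFz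
  have hfactor : coprodComparison F x y =
      coprod.map (F.map coprod.inl ≫ (φ x z).inv ≫ coprod.desc (𝟙 _) (hFz.to _))
        (F.map coprod.inr ≫ (φ z y).inv ≫ coprod.desc (hFz.to _) (𝟙 _)) ≫ (φ x y).hom := by
    ext
    · rw [inl_comp_coprodComparison_of_iso F φ hφ hz hFz, coprod.inl_map_assoc, Category.assoc]
    · rw [inr_comp_coprodComparison_of_iso F φ hφ hz hFz, coprod.inr_map_assoc, Category.assoc]
  rw [hfactor]
  infer_instance

end

end CategoryTheory.Limits

/-- A functor between categories with finite coproducts which preserves initial objects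
and admits a (possibly non-canonical) natural isomorphism `F x ⨿ F y ≅ F (x ⨿ y)`
preserves binary coproducts. -/
theorem stmt1 {A : Type*} [Category A] {B : Type*} [Category B]
    [HasFiniteCoproducts A] [HasFiniteCoproducts B]
    (F : A ⥤ B) [PreservesColimit (Functor.empty A) F]
    (φ : ∀ x y : A, (F.obj x ⨿ F.obj y) ≅ F.obj (x ⨿ y))
    (hφ : ∀ {x x' y y' : A} (f : x ⟶ x') (g : y ⟶ y'),
      coprod.map (F.map f) (F.map g) ≫ (φ x' y').hom
        = (φ x y).hom ≫ F.map (coprod.map f g)) :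
    ∀ x y : A, IsIso (coprodComparison F x y) :=
  -- `colimit (Functor.empty A)` rather than `⊥_ A`, so that the preservation hypothesis applies
  -- in its own universe
  isIso_coprodComparison_of_iso F φ hφ
    (isColimitEquivIsInitialOfIsEmpty _ _ (colimit.isColimit (Functor.empty A)))
    (isColimitEquivIsInitialOfIsEmpty _ _ (isColimitOfPreserves F (colimit.isColimit _)))
end

section
/- Let B be a category with finite products and finite coproducts. If there exists an isomorphism of bifunctors with components φ_{x,y} : x ⨿ y ≅ x × y (natural in x and y, not assumed canonical in any way), then B is semi-additive: B has a zero object, and for all x, y the canonical morphism x ⨿ y ⟶ x × y (whose components are (𝟙_x, 0), (0, 𝟙_y)) is an isomorphism. -/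
/-!
Since `⊥ ≅ ⊥ ⨿ ⊤ ≅ ⊥ ⨯ ⊤ ≅ ⊤`, the initial object is a zero object `0`. Naturality of `φ`
along `0 ⟶ y` and `0 ⟶ x` shows that the off-diagonal entries of `φ x y` factor through `0`,
while its diagonal entries are the isomorphisms `x ≅ x ⨿ 0 ≅ x ⨯ 0 ≅ x` and
`y ≅ 0 ⨿ y ≅ 0 ⨯ y ≅ y`. So `φ x y` is the canonical morphism followed by an invertible
diagonal matrix.
-/

open CategoryTheory Limits

namespace CategoryTheory.Limits

variable {C : Type*} [Category C]

lemma IsInitial.isZero_of_isTerminal {X : C} (hI : IsInitial X) (hT : IsTerminal X) :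
    IsZero X where
  unique_to Y := ⟨⟨⟨hI.to Y⟩, fun f => hI.hom_ext f _⟩⟩
  unique_from Y := ⟨⟨⟨hT.from Y⟩, fun f => hT.hom_ext f _⟩⟩

lemma isZero_initial_of_coprod_iso_prod [HasInitial C] [HasTerminal C]
    [HasBinaryCoproducts C] [HasBinaryProducts C] (e : (⊥_ C) ⨿ (⊤_ C) ≅ (⊥_ C) ⨯ (⊤_ C)) :
    IsZero (⊥_ C) :=
  initialIsInitial.isZero_of_isTerminal <|
    terminalIsTerminal.ofIso ((coprod.leftUnitor _).symm ≪≫ e ≪≫ prod.rightUnitor _)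

section

variable {x z : C}

lemma isIso_coprod_inl_of_isInitial_s7 (h : IsInitial z) [HasBinaryCoproduct x z] :
    IsIso (coprod.inl : x ⟶ x ⨿ z) :=
  (BinaryCofan.isColimit_iff_isIso_inl h _).mp ⟨colimit.isColimit _⟩

lemma isIso_coprod_inr_of_isInitial_s7 (h : IsInitial z) [HasBinaryCoproduct z x] :
    IsIso (coprod.inr : x ⟶ z ⨿ x) :=
  (BinaryCofan.isColimit_iff_isIso_inr h _).mp ⟨colimit.isColimit _⟩

lemma isIso_prod_fst_of_isTerminal (h : IsTerminal z) [HasBinaryProduct x z] :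
    IsIso (prod.fst : x ⨯ z ⟶ x) :=
  (BinaryFan.isLimit_iff_isIso_fst h _).mp ⟨limit.isLimit _⟩

lemma isIso_prod_snd_of_isTerminal (h : IsTerminal z) [HasBinaryProduct z x] :
    IsIso (prod.snd : z ⨯ x ⟶ x) :=
  (BinaryFan.isLimit_iff_isIso_snd h _).mp ⟨limit.isLimit _⟩

end

noncomputable def IsZero.coprodToProd {z : C} (hz : IsZero z) (x y : C)
    [HasBinaryCoproduct x y] [HasBinaryProduct x y] : x ⨿ y ⟶ x ⨯ y :=
  coprod.desc (prod.lift (𝟙 x) (hz.from_ x ≫ hz.to_ y)) (prod.lift (hz.from_ y ≫ hz.to_ x) (𝟙 y))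

section NaturalIso

variable [HasBinaryCoproducts C] [HasBinaryProducts C] {z : C} (hz : IsZero z)
  (φ : ∀ x y : C, x ⨿ y ≅ x ⨯ y)
  (hφ : ∀ {x x' y y' : C} (f : x ⟶ x') (g : y ⟶ y'),
    coprod.map f g ≫ (φ x' y').hom = (φ x y).hom ≫ prod.map f g)
include hz hφ

lemma inl_comp_hom_eq_prod_lift (x y : C) :
    coprod.inl ≫ (φ x y).hom =
      prod.lift (coprod.inl ≫ (φ x z).hom ≫ prod.fst) (hz.from_ x ≫ hz.to_ y) := by
  calc coprod.inl ≫ (φ x y).hom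
      = coprod.inl ≫ coprod.map (𝟙 x) (hz.to_ y) ≫ (φ x y).hom := by simp
    _ = coprod.inl ≫ (φ x z).hom ≫ prod.map (𝟙 x) (hz.to_ y) := by rw [hφ]
    _ = _ := by
      apply prod.hom_ext
      · simp [prod.lift_fst]
      · simp only [Category.assoc, prod.map_snd, prod.lift_snd]
        simp only [← Category.assoc]
        exact congrArg (· ≫ hz.to_ y) (hz.eq_of_tgt _ _)

lemma inr_comp_hom_eq_prod_lift (x y : C) :
    coprod.inr ≫ (φ x y).hom =
      prod.lift (hz.from_ y ≫ hz.to_ x) (coprod.inr ≫ (φ z y).hom ≫ prod.snd) := by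
  calc coprod.inr ≫ (φ x y).hom
      = coprod.inr ≫ coprod.map (hz.to_ x) (𝟙 y) ≫ (φ x y).hom := by simp
    _ = coprod.inr ≫ (φ z y).hom ≫ prod.map (hz.to_ x) (𝟙 y) := by rw [hφ]
    _ = _ := by
      apply prod.hom_ext
      · simp only [Category.assoc, prod.map_fst, prod.lift_fst]
        simp only [← Category.assoc]
        exact congrArg (· ≫ hz.to_ x) (hz.eq_of_tgt _ _)
      · simp [prod.lift_snd]

lemma coprodToProd_comp_prod_map (x y : C) :
    hz.coprodToProd x y ≫
        prod.map (coprod.inl ≫ (φ x z).hom ≫ prod.fst) (coprod.inr ≫ (φ z y).hom ≫ prod.snd) =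
      (φ x y).hom := by
  ext
  all_goals
    simp only [IsZero.coprodToProd, coprod.inl_desc_assoc, coprod.inr_desc_assoc,
      inl_comp_hom_eq_prod_lift hz φ hφ, inr_comp_hom_eq_prod_lift hz φ hφ]
    simp [hz.eq_of_src _ (hz.to_ _)]

lemma isIso_coprodToProd_of_iso (x y : C) : IsIso (hz.coprodToProd x y) := by
  have := isIso_coprod_inl_of_isInitial_s7 (x := x) hz.isInitial
  have := isIso_coprod_inr_of_isInitial_s7 (x := y) hz.isInitial
  have := isIso_prod_fst_of_isTerminal (x := x) hz.isTerminal
  have := isIso_prod_snd_of_isTerminal (x := y) hz.isTerminal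
  exact IsIso.of_isIso_fac_right (coprodToProd_comp_prod_map hz φ hφ x y)

end NaturalIso

end CategoryTheory.Limits

/-- A category with finite products and coproducts admitting a natural isomorphism
`x ⨿ y ≅ x × y` is semi-additive: the initial object is a zero object and the
canonical morphism `x ⨿ y ⟶ x × y` (with matrix `(𝟙, 0; 0, 𝟙)`) is invertible. -/
theorem stmt7 {B : Type*} [Category B] [HasFiniteProducts B] [HasFiniteCoproducts B]
    (φ : ∀ x y : B, (x ⨿ y) ≅ (x ⨯ y))
    (hφ : ∀ {x x' y y' : B} (f : x ⟶ x') (g : y ⟶ y'),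
      coprod.map f g ≫ (φ x' y').hom = (φ x y).hom ≫ prod.map f g) :
    ∃ hz : IsZero (⊥_ B), ∀ x y : B,
      IsIso (coprod.desc
        (prod.lift (𝟙 x) (hz.from_ x ≫ hz.to_ y))
        (prod.lift (hz.from_ y ≫ hz.to_ x) (𝟙 y))) := by
  have hz := isZero_initial_of_coprod_iso_prod (φ _ _)
  exact ⟨hz, isIso_coprodToProd_of_iso hz φ hφ⟩
end

section
/- Let B be a category with finite products and coproducts admitting a natural isomorphism φ_{x,y} : x ⨿ y ≅ x × y. Then the initial object of B is also terminal, i.e. B has a zero object. -/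
/-!
Morphisms out of `⊥ ⨿ ⊥` are determined by their restrictions to the two copies of `⊥`, so they
are unique; transporting along `⊥ ⨿ ⊥ ≅ ⊥ ⨯ ⊥`, the two projections of `⊥ ⨯ ⊥` agree, which makes
`⊥` subterminal. Every object `X` maps to `⊥` through `X ⟶ ⊥ ⨿ X ≅ ⊥ ⨯ X ⟶ ⊥`, so `⊥` is terminal.
-/

open CategoryTheory Limits

namespace CategoryTheory.Limits

variable {C : Type*} [Category C] {I : C}

lemma IsInitial.isZero_of_isSubterminal (hI : IsInitial I) (hs : IsSubterminal I)
    (toI : ∀ X, X ⟶ I) : IsZero I :=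
  ⟨fun Y => ⟨⟨⟨hI.to Y⟩, fun f => hI.hom_ext f _⟩⟩, fun Y => ⟨⟨⟨toI Y⟩, fun f => hs f _⟩⟩⟩

lemma IsInitial.isSubterminal_of_coprodIsoProd (hI : IsInitial I) [HasBinaryCoproduct I I]
    [HasBinaryProduct I I] (e : I ⨿ I ≅ I ⨯ I) : IsSubterminal I := by
  have fst_eq_snd : (prod.fst : I ⨯ I ⟶ I) = prod.snd := by
    rw [← cancel_epi e.hom]
    apply coprod.hom_ext <;> exact hI.hom_ext _ _
  intro Z f g
  simpa only [prod.lift_fst, prod.lift_snd] using congr(prod.lift f g ≫ $fst_eq_snd)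

end CategoryTheory.Limits

theorem stmt8_general {B : Type*} [Category B] [HasFiniteProducts B] [HasFiniteCoproducts B]
    (φ : ∀ x y : B, (x ⨿ y) ≅ (x ⨯ y)) :
    IsZero (⊥_ B) :=
  initialIsInitial.isZero_of_isSubterminal
    (initialIsInitial.isSubterminal_of_coprodIsoProd (φ _ _))
    (fun X => coprod.inr ≫ (φ _ X).hom ≫ prod.fst)

/-- A category with finite products and coproducts admitting a natural isomorphism
`x ⨿ y ≅ x × y` has a zero object: its initial object is also terminal. -/
theorem stmt8 {B : Type*} [Category B] [HasFiniteProducts B] [HasFiniteCoproducts B]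
    (φ : ∀ x y : B, (x ⨿ y) ≅ (x ⨯ y))
    (hφ : ∀ {x x' y y' : B} (f : x ⟶ x') (g : y ⟶ y'),
      coprod.map f g ≫ (φ x' y').hom = (φ x y).hom ≫ prod.map f g) :
    IsZero (⊥_ B) :=
  stmt8_general φ
end
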